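/- Let K ≥ 1, let n₀, n₁, …, n_K be positive integers with n_K = 1, and for each j ∈ {1,…,K} let W_j : ℝ → Mat_{n_j × n_{j-1}}(ℝ) be a matrix-valued curve satisfying, for every j ∈ {1,…,K−1} and every t ∈ ℝ, (W_{j+1}(t))ᵀ W_{j+1}(t) − W_j(t)(W_j(t))ᵀ = (W_{j+1}(0))ᵀ W_{j+1}(0) − W_j(0)(W_j(0))ᵀ. Assume moreover that ‖W_1(t)‖_F → ∞ as t → ∞. Then for every j ∈ {1,…,K}, the ratio ‖W_j(t)‖₂² / ‖W_j(t)‖_F² converges to 1 as t → ∞. -/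

import Mathlib

open Matrix

/-- The spectral norm (largest singular value) of a real matrix: its operator norm
as a linear map between Euclidean `ℓ²` spaces. -/
noncomputable def matrixSpectralNorm {m n : Type*} [Fintype m] [Fintype n] [DecidableEq n]
    (M : Matrix m n ℝ) : ℝ :=
  ‖LinearMap.toContinuousLinearMap (Matrix.toEuclideanLin M)‖

/-- The Frobenius norm of a real matrix. -/
noncomputable def frobeniusNorm {m n : Type*} [Fintype m] [Fintype n]
    (M : Matrix m n ℝ) : ℝ :=
  Real.sqrt (∑ i, ∑ j, (M i j) ^ 2)

/-! Taking traces in the Gram invariance shows that `‖W_{j+1}‖_F² - ‖W_j‖_F²` is constant in `t`,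
so every Frobenius norm diverges with that of the first layer. Taking spectral norms instead, and
using `‖MᵀM‖₂ = ‖MMᵀ‖₂ = ‖M‖₂²`, gives `‖W_{j+1}‖₂² ≤ ‖W_j‖₂² + c_j`. The last layer is a row
vector, for which the two norms agree; descending through the layers, the ratio stays squeezed
between `1` and a quantity tending to `1`, since the additive constants are negligible against the
diverging Frobenius norms. -/

open Filter Topology
open scoped Matrix.Norms.L2Operator

section Norms

variable {m n : Type*} [Fintype m] [Fintype n]

lemma frobeniusNorm_sq (M : Matrix m n ℝ) : frobeniusNorm M ^ 2 = ∑ i, ∑ j, M i j ^ 2 :=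
  Real.sq_sqrt (by positivity)

lemma frobeniusNorm_sq_eq_trace_transpose_mul (M : Matrix m n ℝ) :
    frobeniusNorm M ^ 2 = trace (Mᵀ * M) := by
  rw [frobeniusNorm_sq, Finset.sum_comm]
  simp only [trace, diag_apply, mul_apply, transpose_apply, sq]

lemma frobeniusNorm_sq_eq_trace_mul_transpose (M : Matrix m n ℝ) :
    frobeniusNorm M ^ 2 = trace (M * Mᵀ) := by
  rw [trace_mul_comm, frobeniusNorm_sq_eq_trace_transpose_mul]

variable [DecidableEq n]

lemma matrixSpectralNorm_eq_l2_opNorm (M : Matrix m n ℝ) : matrixSpectralNorm M = ‖M‖ := rfl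

lemma matrixSpectralNorm_le_frobeniusNorm (M : Matrix m n ℝ) :
    matrixSpectralNorm M ≤ frobeniusNorm M := by
  refine ContinuousLinearMap.opNorm_le_bound _ (Real.sqrt_nonneg _) fun x => ?_
  simp only [EuclideanSpace.norm_eq, Real.norm_eq_abs, sq_abs]
  rw [frobeniusNorm, ← Real.sqrt_mul (by positivity), Finset.sum_mul]
  refine Real.sqrt_le_sqrt (Finset.sum_le_sum fun i _ => ?_)
  exact Finset.sum_mul_sq_le_sq_mul_sq _ (M i) x

lemma matrixSpectralNorm_sq_eq_transpose_mul (M : Matrix m n ℝ) :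
    matrixSpectralNorm M ^ 2 = matrixSpectralNorm (Mᵀ * M) := by
  rw [matrixSpectralNorm_eq_l2_opNorm, matrixSpectralNorm_eq_l2_opNorm, sq,
    ← conjTranspose_eq_transpose_of_trivial, l2_opNorm_conjTranspose_mul_self]

lemma matrixSpectralNorm_sq_eq_mul_transpose [DecidableEq m] (M : Matrix m n ℝ) :
    matrixSpectralNorm M ^ 2 = matrixSpectralNorm (M * Mᵀ) := by
  rw [matrixSpectralNorm_eq_l2_opNorm, matrixSpectralNorm_eq_l2_opNorm, sq,
    ← l2_opNorm_conjTranspose M, ← l2_opNorm_conjTranspose_mul_self, conjTranspose_conjTranspose,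
    conjTranspose_eq_transpose_of_trivial]

lemma matrixSpectralNorm_eq_frobeniusNorm_of_unique [Unique m] (M : Matrix m n ℝ) :
    matrixSpectralNorm M = frobeniusNorm M := by
  have hdiag : M * Mᵀ = diagonal fun _ => frobeniusNorm M ^ 2 := by
    ext i i'
    rw [Subsingleton.elim i' i, diagonal_apply_eq, frobeniusNorm_sq_eq_trace_mul_transpose,
      trace, Fintype.sum_unique, Subsingleton.elim default i, diag_apply]
  have hsq := matrixSpectralNorm_sq_eq_mul_transpose M
  rw [hdiag, matrixSpectralNorm_eq_l2_opNorm, matrixSpectralNorm_eq_l2_opNorm,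
    l2_opNorm_diagonal, pi_norm_const, Real.norm_of_nonneg (sq_nonneg _)] at hsq
  rw [matrixSpectralNorm_eq_l2_opNorm]
  exact (pow_left_inj₀ (norm_nonneg _) (Real.sqrt_nonneg _) two_ne_zero).mp hsq

end Norms

noncomputable def spectralFrobeniusRatio {m n : Type*} [Fintype m] [Fintype n] [DecidableEq n]
    (M : Matrix m n ℝ) : ℝ :=
  matrixSpectralNorm M ^ 2 / frobeniusNorm M ^ 2

lemma spectralFrobeniusRatio_le_one {m n : Type*} [Fintype m] [Fintype n] [DecidableEq n]
    (M : Matrix m n ℝ) : spectralFrobeniusRatio M ≤ 1 :=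
  div_le_one_of_le₀ (pow_le_pow_left₀ (norm_nonneg _) (matrixSpectralNorm_le_frobeniusNorm M) 2)
    (sq_nonneg _)

lemma tendsto_sub_div_add_of_tendsto_div {α : Type*} {l : Filter α} {S F : α → ℝ} {r : ℝ}
    (c d : ℝ) (hF : Tendsto F l atTop) (hSF : Tendsto (fun x => S x / F x) l (𝓝 r)) :
    Tendsto (fun x => (S x - c) / (F x + d)) l (𝓝 r) := by
  have hlim : Tendsto (fun x => (S x / F x - c / F x) / (1 + d / F x)) l (𝓝 ((r - 0) / (1 + 0))) :=
    (hSF.sub (tendsto_const_nhds.div_atTop hF)).div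
      (tendsto_const_nhds.add (tendsto_const_nhds.div_atTop hF)) (by norm_num)
  rw [sub_zero, add_zero, div_one] at hlim
  refine hlim.congr' ?_
  filter_upwards [hF.eventually_gt_atTop 0] with x hx
  field_simp

section GramInvariant

variable {p q r : Type*} [Fintype p] [Fintype q] [Fintype r]
  {A : Matrix p q ℝ} {B : Matrix r p ℝ} {C : Matrix p p ℝ}

lemma frobeniusNorm_sq_eq_add_trace_of_transpose_mul_sub (hC : Bᵀ * B - A * Aᵀ = C) :
    frobeniusNorm B ^ 2 = frobeniusNorm A ^ 2 + trace C := by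
  rw [← hC, trace_sub, frobeniusNorm_sq_eq_trace_transpose_mul,
    frobeniusNorm_sq_eq_trace_mul_transpose, add_sub_cancel]

lemma matrixSpectralNorm_sq_le_add_of_transpose_mul_sub [DecidableEq p] [DecidableEq q]
    (hC : Bᵀ * B - A * Aᵀ = C) :
    matrixSpectralNorm B ^ 2 ≤ matrixSpectralNorm A ^ 2 + matrixSpectralNorm C := by
  rw [matrixSpectralNorm_sq_eq_transpose_mul, matrixSpectralNorm_sq_eq_mul_transpose,
    eq_add_of_sub_eq' hC]
  exact norm_add_le (E := Matrix p p ℝ) _ _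

end GramInvariant

section GramInvariantCurves

variable {p q r : Type*} [Fintype p] [Fintype q] [Fintype r]
  {A : ℝ → Matrix p q ℝ} {B : ℝ → Matrix r p ℝ} {C : Matrix p p ℝ}

lemma tendsto_frobeniusNorm_sq_of_transpose_mul_sub (hC : ∀ t, (B t)ᵀ * B t - A t * (A t)ᵀ = C)
    (hA : Tendsto (fun t => frobeniusNorm (A t) ^ 2) atTop atTop) :
    Tendsto (fun t => frobeniusNorm (B t) ^ 2) atTop atTop := by
  simp_rw [fun t => frobeniusNorm_sq_eq_add_trace_of_transpose_mul_sub (hC t)]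
  exact tendsto_atTop_add_const_right _ _ hA

lemma tendsto_spectralFrobeniusRatio_of_transpose_mul_sub [DecidableEq p] [DecidableEq q]
    (hC : ∀ t, (B t)ᵀ * B t - A t * (A t)ᵀ = C)
    (hB : Tendsto (fun t => frobeniusNorm (B t) ^ 2) atTop atTop)
    (hBratio : Tendsto (fun t => spectralFrobeniusRatio (B t)) atTop (𝓝 1)) :
    Tendsto (fun t => spectralFrobeniusRatio (A t)) atTop (𝓝 1) := by
  have hlower : ∀ t, (matrixSpectralNorm (B t) ^ 2 - matrixSpectralNorm C) /
      (frobeniusNorm (B t) ^ 2 + -trace C) ≤ spectralFrobeniusRatio (A t) := fun t => by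
    rw [frobeniusNorm_sq_eq_add_trace_of_transpose_mul_sub (hC t), add_neg_cancel_right]
    exact div_le_div_of_nonneg_right
      (sub_le_iff_le_add.mpr (matrixSpectralNorm_sq_le_add_of_transpose_mul_sub (hC t)))
      (sq_nonneg _)
  exact tendsto_of_tendsto_of_tendsto_of_le_of_le
    (tendsto_sub_div_add_of_tendsto_div _ _ hB hBratio) tendsto_const_nhds hlower
    fun t => spectralFrobeniusRatio_le_one (A t)

lemma tendsto_spectralFrobeniusRatio_of_unique [DecidableEq q] [Unique p]
    (hA : Tendsto (fun t => frobeniusNorm (A t) ^ 2) atTop atTop) :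
    Tendsto (fun t => spectralFrobeniusRatio (A t)) atTop (𝓝 1) := by
  refine tendsto_const_nhds.congr' ?_
  filter_upwards [hA.eventually_gt_atTop 0] with t ht
  rw [spectralFrobeniusRatio, matrixSpectralNorm_eq_frobeniusNorm_of_unique, div_self ht.ne']

end GramInvariantCurves

theorem spectral_frobenius_ratio_tendsto_one_general
    (K : ℕ)
    (n : ℕ → ℕ) (hlast : n K = 1)
    (W : (j : ℕ) → ℝ → Matrix (Fin (n (j + 1))) (Fin (n j)) ℝ)
    (hGram : ∀ j : ℕ, j + 1 < K → ∀ t : ℝ,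
      (W (j + 1) t)ᵀ * W (j + 1) t - W j t * (W j t)ᵀ
        = (W (j + 1) 0)ᵀ * W (j + 1) 0 - W j 0 * (W j 0)ᵀ)
    (hdiv : Filter.Tendsto (fun t => frobeniusNorm (W 0 t)) Filter.atTop Filter.atTop) :
    ∀ j < K,
      Filter.Tendsto (fun t => matrixSpectralNorm (W j t) ^ 2 / frobeniusNorm (W j t) ^ 2)
        Filter.atTop (nhds 1) := by
  intro j hj
  obtain ⟨K, rfl⟩ : ∃ k, K = k + 1 := ⟨K - 1, by omega⟩
  have hfrob : ∀ i ≤ K, Tendsto (fun t => frobeniusNorm (W i t) ^ 2) atTop atTop := by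
    intro i hi
    induction i with
    | zero => exact (tendsto_pow_atTop two_ne_zero).comp hdiv
    | succ i ih =>
      exact tendsto_frobeniusNorm_sq_of_transpose_mul_sub (hGram i (by omega)) (ih (by omega))
  have : Unique (Fin (n (K + 1))) := (finCongr hlast).unique
  exact Nat.decreasingInduction
    (motive := fun i _ => Tendsto (fun t => spectralFrobeniusRatio (W i t)) atTop (𝓝 1))
    (fun i hi ih => tendsto_spectralFrobeniusRatio_of_transpose_mul_sub (hGram i (by omega))
      (hfrob (i + 1) hi) ih)
    (tendsto_spectralFrobeniusRatio_of_unique (hfrob K le_rfl)) (Nat.le_of_lt_succ hj)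

/-- **Asymptotic rank-one bias.** For a chain of linear layers
`W j : ℝ → Mat_{n (j+1) × n j}(ℝ)`, `j = 0,…,K-1` (paper layers `1,…,K`), with scalar
output (`n K = 1`) and the adjacent-layer Gram invariance, if the Frobenius norm of the
first layer diverges, then for every layer the ratio `‖W_j(t)‖₂² / ‖W_j(t)‖_F²`
converges to `1`. -/
theorem spectral_frobenius_ratio_tendsto_one
    (K : ℕ) (hK : 1 ≤ K)
    (n : ℕ → ℕ) (hn : ∀ j ≤ K, 0 < n j) (hlast : n K = 1)
    (W : (j : ℕ) → ℝ → Matrix (Fin (n (j + 1))) (Fin (n j)) ℝ)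
    (hGram : ∀ j : ℕ, j + 1 < K → ∀ t : ℝ,
      (W (j + 1) t)ᵀ * W (j + 1) t - W j t * (W j t)ᵀ
        = (W (j + 1) 0)ᵀ * W (j + 1) 0 - W j 0 * (W j 0)ᵀ)
    (hdiv : Filter.Tendsto (fun t => frobeniusNorm (W 0 t)) Filter.atTop Filter.atTop) :
    ∀ j < K,
      Filter.Tendsto (fun t => matrixSpectralNorm (W j t) ^ 2 / frobeniusNorm (W j t) ^ 2)
        Filter.atTop (nhds 1) :=
  spectral_frobenius_ratio_tendsto_one_general K n hlast W hGram hdiv
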